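/- In Ω over S = ℂ[x,y,z] with the deformed action f·_d τ := (b/(b+c))·(fτ + (1/b)·df∧i_Rτ), one has (z·_d dx)∧dy ≠ dx∧(z·_d dy); explicitly, z·_d dx = (1/2)(z dx + x dz), so (z·_d dx)∧dy = (1/2)(z dx∧dy + x dz∧dy) while dx∧(z·_d dy) = (1/2)(z dx∧dy + y dx∧dz), and these two 2-forms are distinct. In particular the deformed module of 2-forms is not the exterior square of the deformed module of 1-forms. -/

import Mathlib

/-!
Common setup: a concrete model of the exterior algebra `Ω` of differential forms over
`S = ℂ[x₁,…,xₙ]`.  An element of `Ω` is encoded as a function assigning to each subset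
`I ⊆ {1,…,n}` the polynomial coefficient of `dx_I = dx_{i₁} ∧ … ∧ dx_{i_r}` (indices in
increasing order).  The `r`-forms are the elements supported on subsets of cardinality `r`.
-/

open MvPolynomial

noncomputable section

/-- The polynomial ring `S = ℂ[x₁,…,xₙ]`. -/
abbrev S (n : ℕ) : Type := MvPolynomial (Fin n) ℂ

/-- The exterior algebra of differential forms over `S`: a form is given by its coefficient
at each basis monomial `dx_I`, `I ⊆ {1,…,n}`. -/
abbrev Ω (n : ℕ) : Type := Finset (Fin n) → S n

variable {n : ℕ}

/-- The sign `(-1)^{#{(i,j) ∈ I × J : j < i}}` arising when reordering `dx_I ∧ dx_J`. -/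
def sgnMerge (I J : Finset (Fin n)) : ℤ :=
  (-1) ^ (∑ i ∈ I, (J.filter (fun j => j < i)).card)

/-- Exterior (wedge) product of forms. -/
def wedge (μ τ : Ω n) : Ω n :=
  fun K => ∑ I ∈ K.powerset, (sgnMerge I (K \ I) : S n) * μ I * τ (K \ I)

/-- Contraction `i_X` with a vector field `X = Σ_k X_k ∂/∂x_k` (given by its components). -/
def contr (X : Fin n → S n) (τ : Ω n) : Ω n :=
  fun J => ∑ k ∈ Jᶜ, ((-1 : S n) ^ (J.filter (fun j => j < k)).card) * X k * τ (insert k J)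

/-- The exterior differential `d`. -/
def extd (τ : Ω n) : Ω n :=
  fun I => ∑ k ∈ I, ((-1 : S n) ^ (I.filter (fun j => j < k)).card) * pderiv k (τ (I.erase k))

/-- The radial vector field `R = Σ_k x_k ∂/∂x_k`. -/
def radial (n : ℕ) : Fin n → S n := fun k => X k

/-- The unit `1 ∈ Ω⁰`. -/
def oneForm (n : ℕ) : Ω n := fun I => if I = ∅ then 1 else 0

/-- A polynomial regarded as a `0`-form. -/
def ofPoly (f : S n) : Ω n := fun I => if I = ∅ then f else 0

/-- The basic `1`-form `dx_k`. -/
def dx (k : Fin n) : Ω n := fun I => if I = {k} then 1 else 0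

/-- `τ` is an `r`-form, i.e. `τ ∈ Ω^r`. -/
def IsForm (τ : Ω n) (r : ℕ) : Prop := ∀ I : Finset (Fin n), I.card ≠ r → τ I = 0

/-- `τ ∈ Ω^z` for an integer `z` (so `τ = 0` when `z < 0`). -/
def IsFormZ (τ : Ω n) (z : ℤ) : Prop := ∀ I : Finset (Fin n), (I.card : ℤ) ≠ z → τ I = 0

/-- `τ ∈ Ω^r(b)`: an `r`-form, homogeneous of total degree `b`, where each `x_i` and each
`dx_i` has degree `1` (this is the grading by the Lie derivative along the radial field). -/
def IsHomogForm (τ : Ω n) (r b : ℕ) : Prop :=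
  IsForm τ r ∧ ∀ (I : Finset (Fin n)) (m : Fin n →₀ ℕ),
    coeff m (τ I) ≠ 0 → (∑ i ∈ m.support, m i) + I.card = b

/-- The coordinate vector field `∂/∂x_k`. -/
def coordVF (n : ℕ) (k : Fin n) : Fin n → S n := fun j => if j = k then 1 else 0

/-- Contraction `i_L` with a vector valued differential form `L ∈ Ω^{q+1} ⊗_S T`,
encoded by its components `L k ∈ Ω^{q+1}` with respect to the basis `∂/∂x_k` of `T`,
so `L = Σ_k (L k) ⊗ ∂/∂x_k` and `i_L τ = Σ_k (L k) ∧ i_{∂/∂x_k} τ`. -/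
def vcontr (L : Fin n → Ω n) (τ : Ω n) : Ω n :=
  ∑ k : Fin n, wedge (L k) (contr (coordVF n k) τ)

/-- The Lie derivative `L_K = [i_K, d] = i_K ∘ d + (-1)^q d ∘ i_K` with respect to a vector
valued form `K ∈ Ω^q ⊗_S T` (here `i_K` has degree `q - 1` and `d` has degree `1`). -/
def lieD (q : ℤ) (K : Fin n → Ω n) (τ : Ω n) : Ω n :=
  vcontr K (extd τ) + ((-1 : ℂ) ^ q) • extd (vcontr K τ)

/-- The identity vector valued `1`-form `Id = Σ_k dx_k ⊗ ∂/∂x_k ∈ Ω¹ ⊗_S T`. -/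
def idVF (n : ℕ) : Fin n → Ω n := fun k => dx k

/-- `D : Ω → Ω` is a (ℂ-linear) derivation of degree `q`. -/
structure IsDerivationOfDegree (D : Ω n → Ω n) (q : ℤ) : Prop where
  map_add : ∀ μ τ : Ω n, D (μ + τ) = D μ + D τ
  map_smul : ∀ (a : ℂ) (τ : Ω n), D (a • τ) = a • D τ
  map_degree : ∀ (r : ℕ) (τ : Ω n), IsForm τ r → IsFormZ (D τ) ((r : ℤ) + q)
  leibniz : ∀ (r : ℕ) (μ τ : Ω n), IsForm μ r →
    D (wedge μ τ) = wedge (D μ) τ + ((-1 : ℂ) ^ ((r : ℤ) * q)) • wedge μ (D τ)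

/-- `D : Ω → Ω` is a differential operator of order `1` and degree `q`, i.e. a ℂ-linear
map of degree `q` with `[[D, λ_μ], λ_τ] = 0` for all `μ, τ ∈ Ω` (stated on homogeneous
`μ ∈ Ω^r`, `τ ∈ Ω^s`, with the graded commutator signs). -/
structure IsDiffOpOfDegree (D : Ω n → Ω n) (q : ℤ) : Prop where
  map_add : ∀ μ τ : Ω n, D (μ + τ) = D μ + D τ
  map_smul : ∀ (a : ℂ) (τ : Ω n), D (a • τ) = a • D τ
  map_degree : ∀ (r : ℕ) (τ : Ω n), IsForm τ r → IsFormZ (D τ) ((r : ℤ) + q)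
  order_one : ∀ (r s : ℕ) (μ τ : Ω n), IsForm μ r → IsForm τ s → ∀ σ : Ω n,
    D (wedge μ (wedge τ σ)) - ((-1 : ℂ) ^ (q * (r : ℤ))) • wedge μ (D (wedge τ σ)) -
      ((-1 : ℂ) ^ ((q + (r : ℤ)) * (s : ℤ))) •
        (wedge τ (D (wedge μ σ)) - ((-1 : ℂ) ^ (q * (r : ℤ))) • wedge τ (wedge μ (D σ))) = 0

/-- The deformed action `f · τ = α(r,b,c)·fτ + β(r,b,c)·df ∧ i_R τ` of a homogeneous
polynomial `f ∈ S(c)` on `τ ∈ Ω^r(b)`, for given scalar families `α`, `β`. -/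
def defAct (α β : ℕ → ℕ → ℕ → ℂ) (r b c : ℕ) (f : S n) (τ : Ω n) : Ω n :=
  α r b c • (f • τ) + β r b c • wedge (extd (ofPoly f)) (contr (radial n) τ)

/-- The differential operator `ω̃₁ ∧ L_Id + ω̃₂ ∧ i_Id + λ_μ̃`, evaluated on `τ ∈ Ω^r`:
`τ ↦ ω̃₁ ∧ dτ + r · ω̃₂ ∧ τ + μ̃ ∧ τ`. -/
def opId (ω₁ ω₂ μ : Ω n) (r : ℕ) (τ : Ω n) : Ω n :=
  wedge ω₁ (extd τ) + (r : ℂ) • wedge ω₂ τ + wedge μ τ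

/-- The quantity `b - a·(r/q + (-1)^q t)`. -/
def denomA (q a : ℕ) (t : ℂ) (r b : ℕ) : ℂ :=
  (b : ℂ) - (a : ℂ) * ((r : ℂ) / (q : ℂ) + (-1 : ℂ) ^ q * t)

/-- `α(r,b,c) = (b - a(r/q + (-1)^q t)) / (b + c - a(r/q + (-1)^q t))`. -/
def alphaA (q a : ℕ) (t : ℂ) (r b c : ℕ) : ℂ :=
  denomA q a t r b / (denomA q a t r b + (c : ℂ))

/-- `β(r,b,c) = α(r,b,c) / (b - a(r/q + (-1)^q t))`. -/
def betaA (q a : ℕ) (t : ℂ) (r b c : ℕ) : ℂ :=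
  alphaA q a t r b c / denomA q a t r b

/-- A linearizable differential operator
`D = ω₁ ∧ L_Id + ((1/q)dω₁ + ω₂) ∧ i_Id + (t·λ_{dω₁} + λ_μ)`, evaluated on `τ ∈ Ω^r`. -/
def linOp (q : ℕ) (t : ℂ) (ω₁ ω₂ μ : Ω n) (r : ℕ) (τ : Ω n) : Ω n :=
  wedge ω₁ (extd τ) + (r : ℂ) • wedge ((q : ℂ)⁻¹ • extd ω₁ + ω₂) τ +
    wedge (t • extd ω₁ + μ) τ

/-- The deformed action linearizing the exterior differential:
`f ·_d τ = (b/(b+c))·(fτ + (1/b)·df ∧ i_R τ)`, with `f ·_d τ = fτ` when `b = 0`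
(in particular when `b = c = 0`). -/
def dotdT (b c : ℕ) (f : S n) (τ : Ω n) : Ω n :=
  if b = 0 then f • τ
  else ((b : ℂ) / ((b : ℂ) + (c : ℂ))) •
    (f • τ + ((b : ℂ))⁻¹ • wedge (extd (ofPoly f)) (contr (radial n) τ))

/-- The deformed action linearizing the exterior differential:
`f ·_d τ = (b/(b+c))·(fτ + (1/b)·df ∧ i_R τ)`, with the usual product when `b = c = 0`. -/
def dotd (b c : ℕ) (f : S n) (τ : Ω n) : Ω n :=
  if b = 0 ∧ c = 0 then f • τ
  else ((b : ℂ) / ((b : ℂ) + (c : ℂ))) •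
    (f • τ + ((b : ℂ))⁻¹ • wedge (extd (ofPoly f)) (contr (radial n) τ))

/-- `κ(r) = (r+1)/2`. -/
def kapC (r : ℕ) : ℂ := ((r : ℂ) + 1) / 2

/-- The differential operator `ω△ : Ω^r → Ω^{r+2}`, `ω△τ = ω ∧ dτ + κ(r)·dω ∧ τ`. -/
def triOp (ω : Ω n) (r : ℕ) (τ : Ω n) : Ω n :=
  wedge ω (extd τ) + kapC r • wedge (extd ω) τ

/-- The deformed action linearizing `ω△`:
`f ·_{ω△} τ = (1/(b+c-κ(r)a))·[(b-κ(r)a)·fτ + df ∧ i_R τ]`. -/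
def triAct (a r b c : ℕ) (f : S n) (τ : Ω n) : Ω n :=
  ((b : ℂ) + (c : ℂ) - kapC r * (a : ℂ))⁻¹ •
    (((b : ℂ) - kapC r * (a : ℂ)) • (f • τ) + wedge (extd (ofPoly f)) (contr (radial n) τ))

/-- The Lie derivative `L_X ω = i_X (dω) + d (i_X ω)` along a vector field `X`. -/
def lieVF (X : Fin n → S n) (ω : Ω n) : Ω n := contr X (extd ω) + extd (contr X ω)

end

/-!
Everything reduces to `d(x_k) = dx_k` and `i_R dx_m = x_m`, which give
`x_k ·_d dx_m = ½(x_k dx_m + x_m dx_k)`. The two wedge products are then told apart by their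
`dx ∧ dz` coefficient: `0` on the left, `y/2` on the right.
-/

section

variable {n : ℕ}

lemma wedge_add_left (μ ν τ : Ω n) : wedge (μ + ν) τ = wedge μ τ + wedge ν τ := by
  funext K
  simp only [wedge, Pi.add_apply, ← Finset.sum_add_distrib]
  exact Finset.sum_congr rfl fun I _ => by ring

lemma wedge_add_right (μ ν τ : Ω n) : wedge τ (μ + ν) = wedge τ μ + wedge τ ν := by
  funext K
  simp only [wedge, Pi.add_apply, ← Finset.sum_add_distrib]
  exact Finset.sum_congr rfl fun I _ => by ring

lemma wedge_smul_left {R : Type*} [CommSemiring R] [Algebra R (S n)] (a : R) (μ τ : Ω n) :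
    wedge (a • μ) τ = a • wedge μ τ := by
  funext K
  simp only [wedge, Pi.smul_apply, Algebra.smul_def, Finset.mul_sum]
  exact Finset.sum_congr rfl fun I _ => by ring

lemma wedge_smul_right {R : Type*} [CommSemiring R] [Algebra R (S n)] (a : R) (μ τ : Ω n) :
    wedge τ (a • μ) = a • wedge τ μ := by
  funext K
  simp only [wedge, Pi.smul_apply, Algebra.smul_def, Finset.mul_sum]
  exact Finset.sum_congr rfl fun I _ => by ring

lemma wedge_ofPoly_right (μ : Ω n) (f : S n) : wedge μ (ofPoly f) = f • μ := by
  funext K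
  simp only [wedge, ofPoly, Pi.smul_apply, smul_eq_mul, Finset.sdiff_eq_empty_iff_subset,
    mul_ite, mul_zero]
  rw [Finset.sum_eq_single K
    (fun I hI hne => if_neg fun h => hne (subset_antisymm (Finset.mem_powerset.1 hI) h))
    (by simp)]
  simp [sgnMerge, mul_comm]

lemma extd_ofPoly (f : S n) : extd (ofPoly f) = ∑ k, pderiv k f • dx k := by
  funext I
  simp only [extd, ofPoly, dx, Finset.erase_eq_empty_iff, Finset.sum_apply, Pi.smul_apply,
    smul_eq_mul, mul_ite, mul_one, mul_zero]
  rw [← Finset.sum_subset (Finset.subset_univ I) fun k _ hk => if_neg (by rintro rfl; simp at hk)]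
  refine Finset.sum_congr rfl fun k hk => ?_
  by_cases hI : I = {k}
  · subst hI
    simp [Finset.filter_singleton]
  · simp [hI, Finset.ne_empty_of_mem hk]

lemma extd_ofPoly_X (k : Fin n) : extd (ofPoly (X k : S n)) = dx k := by
  simp [extd_ofPoly, pderiv_X, Pi.single_apply]

lemma contr_dx (V : Fin n → S n) (m : Fin n) : contr V (dx m) = ofPoly (V m) := by
  funext J
  simp only [contr, ofPoly, dx, mul_ite, mul_one, mul_zero]
  by_cases hJ : J = ∅
  · subst hJ
    simp
  · rw [if_neg hJ]
    refine Finset.sum_eq_zero fun k hk => if_neg fun h => hJ ?_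
    have hcard := congrArg Finset.card h
    rw [Finset.card_insert_of_notMem (Finset.mem_compl.1 hk), Finset.card_singleton] at hcard
    exact Finset.card_eq_zero.1 (by omega)

lemma wedge_dx_left_apply (k : Fin n) (τ : Ω n) (K : Finset (Fin n)) :
    wedge (dx k) τ K =
      if k ∈ K then (sgnMerge {k} (K.erase k) : S n) * τ (K.erase k) else 0 := by
  simp [wedge, dx, Finset.sdiff_singleton_eq_erase]

lemma wedge_dx_dx_apply_of_ne {i j : Fin n} {K : Finset (Fin n)} (hK : K ≠ {i, j}) :
    wedge (dx i) (dx j) K = 0 := by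
  rw [wedge_dx_left_apply]
  split_ifs with hi
  · have he : K.erase i ≠ {j} := fun he => hK (by rw [← Finset.insert_erase hi, he])
    simp [dx, he]
  · rfl

lemma wedge_dx_dx_apply_of_lt {i j : Fin n} (h : i < j) : wedge (dx i) (dx j) {i, j} = 1 := by
  rw [wedge_dx_left_apply]
  simp [dx, h.ne, sgnMerge, Finset.filter_singleton, not_lt_of_gt h]

lemma dotd_X_dx (k m : Fin n) :
    dotd 1 1 (X k : S n) (dx m) =
      (2⁻¹ : ℂ) • ((X k : S n) • dx m + (X m : S n) • dx k) := by
  rw [dotd, if_neg (by norm_num), extd_ofPoly_X, contr_dx, wedge_ofPoly_right]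
  norm_num [radial]

end

/-- In `Ω` over `S = ℂ[x,y,z]` (here `x = X 0`, `y = X 1`, `z = X 2`)
with the deformed action `f ·_d τ = (b/(b+c))·(fτ + (1/b)·df∧i_Rτ)`, one has
`z ·_d dx = (1/2)(z dx + x dz)`, hence
`(z ·_d dx)∧dy = (1/2)(z dx∧dy + x dz∧dy)` while
`dx∧(z ·_d dy) = (1/2)(z dx∧dy + y dx∧dz)`, and these two `2`-forms are distinct;
in particular `(z ·_d dx)∧dy ≠ dx∧(z ·_d dy)`. -/
theorem dotd_not_compatible_with_wedge :
    dotd 1 1 (X 2 : S 3) (dx (0 : Fin 3)) =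
      (2⁻¹ : ℂ) • ((X 2 : S 3) • dx (0 : Fin 3) + (X 0 : S 3) • dx (2 : Fin 3)) ∧
    wedge (dotd 1 1 (X 2 : S 3) (dx (0 : Fin 3))) (dx (1 : Fin 3)) =
      (2⁻¹ : ℂ) • ((X 2 : S 3) • wedge (dx (0 : Fin 3)) (dx (1 : Fin 3)) +
        (X 0 : S 3) • wedge (dx (2 : Fin 3)) (dx (1 : Fin 3))) ∧
    wedge (dx (0 : Fin 3)) (dotd 1 1 (X 2 : S 3) (dx (1 : Fin 3))) =
      (2⁻¹ : ℂ) • ((X 2 : S 3) • wedge (dx (0 : Fin 3)) (dx (1 : Fin 3)) +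
        (X 1 : S 3) • wedge (dx (0 : Fin 3)) (dx (2 : Fin 3))) ∧
    wedge (dotd 1 1 (X 2 : S 3) (dx (0 : Fin 3))) (dx (1 : Fin 3)) ≠
      wedge (dx (0 : Fin 3)) (dotd 1 1 (X 2 : S 3) (dx (1 : Fin 3))) := by
  refine ⟨dotd_X_dx 2 0, ?_, ?_, fun h => ?_⟩
  · rw [dotd_X_dx, wedge_smul_left, wedge_add_left, wedge_smul_left, wedge_smul_left]
  · rw [dotd_X_dx, wedge_smul_right, wedge_add_right, wedge_smul_right, wedge_smul_right]
  · have h02 := congrFun h {0, 2}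
    simp only [dotd_X_dx, wedge_smul_left, wedge_smul_right, wedge_add_left, wedge_add_right,
      Pi.smul_apply, Pi.add_apply, wedge_dx_dx_apply_of_lt (show (0 : Fin 3) < 2 by decide),
      wedge_dx_dx_apply_of_ne (show ({0, 2} : Finset (Fin 3)) ≠ {0, 1} by decide),
      wedge_dx_dx_apply_of_ne (show ({0, 2} : Finset (Fin 3)) ≠ {2, 1} by decide)] at h02
    simp only [smul_zero, mul_zero, add_zero, zero_add, mul_one, smul_eq_mul] at h02
    exact smul_ne_zero (by norm_num) (X_ne_zero 1) h02.symm
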